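/- arXiv:math/0005302 — 11 statements merged into one kernel-verified Lean document; each statement's English description precedes it below -/
import Mathlib

section
/- Let L be a finitely generated group and R a normal subgroup of L such that every homomorphism from the quotient H = L/R to a finite group is trivial and the second integral group homology H₂(H, ℤ) vanishes. Then for every subgroup U of R that is normal in L and of finite index in R, there exists a finite-index subgroup V of L with V ∩ R ≤ U. -/
/-- The kernel of the canonical presentation `FreeGroup G → G`. -/
def presentationKernel (G : Type*) [Group G] : Subgroup (FreeGroup G) :=
  (FreeGroup.lift (id : G → G)).ker

/-- Numerator `R ⊓ [F, F]` of Hopf's formula. -/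
def hopfNumerator (G : Type*) [Group G] : Subgroup (FreeGroup G) :=
  presentationKernel G ⊓ commutator (FreeGroup G)

/-- Denominator `[F, R]` of Hopf's formula. -/
def hopfDenominator (G : Type*) [Group G] : Subgroup (FreeGroup G) :=
  ⁅(⊤ : Subgroup (FreeGroup G)), presentationKernel G⁆

instance (G : Type*) [Group G] : (presentationKernel G).Normal := by
  unfold presentationKernel; infer_instance

instance (G : Type*) [Group G] : (hopfDenominator G).Normal := by
  unfold hopfDenominator; infer_instance

/-- The second integral homology `H₂(G, ℤ)` (Schur multiplier), via Hopf's formula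
`H₂(G) = (R ∩ [F, F]) / [F, R]` for the canonical presentation `1 → R → F → G → 1`. -/
def schurMultiplier (G : Type*) [Group G] : Type _ :=
  hopfNumerator G ⧸ (hopfDenominator G).subgroupOf (hopfNumerator G)

instance (G : Type*) [Group G] : Group (schurMultiplier G) := by
  unfold schurMultiplier; infer_instance

/-- The fiber product `L ×_{L/N} L = {(x, y) | x⁻¹ * y ∈ N}` as a subgroup of `L × L`. -/
def fiberProduct {L : Type*} [Group L] (N : Subgroup L) [N.Normal] : Subgroup (L × L) where
  carrier := {p | p.1⁻¹ * p.2 ∈ N}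
  one_mem' := by simpa using N.one_mem
  mul_mem' := by
    intro a b ha hb
    simp only [Set.mem_setOf_eq, ← QuotientGroup.eq] at *
    simp only [Prod.fst_mul, Prod.snd_mul, QuotientGroup.mk_mul, ha, hb]
  inv_mem' := by
    intro a ha
    simp only [Set.mem_setOf_eq, ← QuotientGroup.eq] at *
    simp only [Prod.fst_inv, Prod.snd_inv, QuotientGroup.mk_inv, ha]

/-!
Pass to `G = L ⧸ U`, in which `N = R ⧸ U` is a finite normal subgroup with `G ⧸ N ≅ H`. The
centralizer `C` of `N` has finite index, so it maps onto `H`, which has no proper finite-index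
subgroups; thus `C → H` is a central extension. Lifting the canonical presentation
`FreeGroup H → H` through `C`, Hopf's formula and `H₂(H) = 0` give `[C, C] ∩ N = 1`.
Finally `H` is perfect, because its abelianization is finitely generated, hence residually finite,
and has no nontrivial finite quotients; so `[C, C]` still maps onto `H`, hence has finite index in
`G`, and its preimage in `L` is the required `V`.
-/

open scoped commutatorElement

namespace Group

variable {G G' : Type*} [Group G] [Group G']

theorem ResiduallyFinite.of_injective [ResiduallyFinite G'] (f : G →* G')
    (hf : Function.Injective f) : ResiduallyFinite G := by
  rw [residuallyFinite_iff_forall_finiteIndexNormalSubgroup]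
  intro g hg
  exact hf <| (map_one f).symm ▸
    eq_one_iff_forall_finiteIndexNormalSubroup (f g) fun K ↦ hg (K.comap f)

instance ResiduallyFinite.pi {ι : Type*} {G : ι → Type*} [∀ i, Group (G i)]
    [∀ i, ResiduallyFinite (G i)] : ResiduallyFinite (∀ i, G i) := by
  rw [residuallyFinite_iff_forall_finiteIndexNormalSubgroup]
  intro g hg
  funext i
  exact eq_one_iff_forall_finiteIndexNormalSubroup (g i)
    fun K ↦ hg (K.comap (Pi.evalMonoidHom G i))

instance : ResiduallyFinite (Multiplicative ℤ) := by
  refine residuallyFinite_of_forall_exists_finite_monoidHom fun n hn ↦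
    ⟨Multiplicative (ZMod (n.toAdd.natAbs + 1)), inferInstance, inferInstance,
      (Int.castAddHom _).toMultiplicative, fun h ↦ ?_⟩
  have hdvd : ((n.toAdd.natAbs + 1 : ℕ) : ℤ) ∣ n.toAdd :=
    (ZMod.intCast_zmod_eq_zero_iff_dvd _ _).mp h
  have := Int.natAbs_le_of_dvd_ne_zero hdvd (by simpa using hn)
  omega

end Group

instance CommGroup.residuallyFinite_of_fg {A : Type*} [CommGroup A] [Group.FG A] :
    Group.ResiduallyFinite A := by
  obtain ⟨ι, j, _, _, p, hp, e, ⟨φ⟩⟩ := CommGroup.equiv_free_prod_prod_multiplicative_zmod A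
  have : ∀ i, NeZero (p i ^ e i) := fun i ↦ ⟨pow_ne_zero _ (hp i).ne_zero⟩
  exact .of_injective φ.toMonoidHom φ.injective

def NoNontrivialFiniteQuotients (G : Type) [Group G] : Prop :=
  ∀ (F : Type) [Group F] [Finite F] (f : G →* F), f = 1

namespace NoNontrivialFiniteQuotients

variable {G : Type} [Group G]

theorem eq_top_of_finiteIndex (hG : NoNontrivialFiniteQuotients G) (K : Subgroup G)
    [K.FiniteIndex] : K = ⊤ := by
  have hcore : K.normalCore = ⊤ := by
    simpa using congrArg MonoidHom.ker (hG _ (QuotientGroup.mk' K.normalCore))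
  exact top_le_iff.mp (hcore ▸ K.normalCore_le)

theorem commutator_eq_top [Group.FG G] (hG : NoNontrivialFiniteQuotients G) :
    commutator G = ⊤ := by
  have : Group.FG (Abelianization G) :=
    Group.fg_of_surjective (f := Abelianization.of) QuotientGroup.mk_surjective
  refine eq_top_iff.mpr fun x _ ↦ ?_
  rw [← Abelianization.ker_of, MonoidHom.mem_ker]
  refine Group.eq_one_iff_forall_finiteIndexNormalSubroup _ fun K ↦ ?_
  have := DFunLike.congr_fun (hG _ ((QuotientGroup.mk' K.toSubgroup).comp Abelianization.of)) x
  exact FiniteIndexNormalSubgroup.mem_toSubgroup_iff.mp (by simpa using this)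

end NoNontrivialFiniteQuotients

theorem hopfNumerator_le_hopfDenominator {G : Type*} [Group G]
    (h : Subsingleton (schurMultiplier G)) : hopfNumerator G ≤ hopfDenominator G := by
  intro w hw
  have : (QuotientGroup.mk ⟨w, hw⟩ : schurMultiplier G) = 1 := h.elim _ _
  exact Subgroup.mem_subgroupOf.mp ((QuotientGroup.eq_one_iff _).mp this)

theorem map_hopfDenominator_eq_bot {G H : Type*} [Group G] [Group H] (φ : FreeGroup G →* H)
    (hφ : φ.range ≤ Subgroup.centralizer ((presentationKernel G).map φ)) :
    (hopfDenominator G).map φ = ⊥ := by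
  rwa [hopfDenominator, Subgroup.map_commutator, ← MonoidHom.range_eq_map,
    Subgroup.commutator_eq_bot_iff_le_centralizer]

theorem commutatorElement_eq_of_commute {G : Type*} [Group G] {c c' d d' : G}
    (hc : Commute (c⁻¹ * c') d') (hd : Commute (d⁻¹ * d') c) : ⁅c', d'⁆ = ⁅c, d⁆ := by
  obtain ⟨z, rfl⟩ : ∃ z, c' = c * z := ⟨c⁻¹ * c', by group⟩
  obtain ⟨z', rfl⟩ : ∃ z', d' = d * z' := ⟨d⁻¹ * d', by group⟩
  rw [inv_mul_cancel_left] at hc hd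
  calc ⁅c * z, d * z'⁆ = c * (z * (d * z')) * z⁻¹ * c⁻¹ * z'⁻¹ * d⁻¹ := by group
    _ = c * d * (z' * c⁻¹) * z'⁻¹ * d⁻¹ := by rw [hc.eq]; group
    _ = ⁅c, d⁆ := by rw [hd.inv_right.eq]; group

section CentralExtension

variable {G H : Type*} [Group G] [Group H] {q : G →* H} {C : Subgroup G}

theorem exists_freeGroup_hom_range_le (hCq : C.map q = ⊤) :
    ∃ φ : FreeGroup H →* G, φ.range ≤ C ∧ q.comp φ = FreeGroup.lift id := by
  choose s hsC hsq using fun h : H ↦ (hCq ▸ Subgroup.mem_top h : h ∈ C.map q)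
  exact ⟨FreeGroup.lift s, FreeGroup.range_lift_le (Set.range_subset_iff.mpr hsC),
    FreeGroup.ext_hom _ _ fun h ↦ by simp [hsq]⟩

theorem commutator_le_map_commutator (hC : C ≤ Subgroup.centralizer q.ker)
    (φ : FreeGroup H →* G) (hφC : φ.range ≤ C) (hqφ : q.comp φ = FreeGroup.lift id) :
    ⁅C, C⁆ ≤ (commutator (FreeGroup H)).map φ := by
  rw [Subgroup.commutator_le]
  intro c hc d hd
  refine ⟨⁅FreeGroup.of (q c), FreeGroup.of (q d)⁆,
    Subgroup.commutator_mem_commutator trivial trivial, ?_⟩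
  have hlift : ∀ x, x⁻¹ * φ (FreeGroup.of (q x)) ∈ q.ker := fun x ↦ by
    rw [MonoidHom.mem_ker, map_mul, map_inv, ← MonoidHom.comp_apply, hqφ]
    simp
  have hcomm : ∀ x ∈ C, ∀ z ∈ q.ker, Commute z x := fun x hx z hz ↦
    Subgroup.mem_centralizer_iff.mp (hC hx) z hz
  rw [map_commutatorElement]
  exact commutatorElement_eq_of_commute (hcomm _ (hφC ⟨_, rfl⟩) _ (hlift c))
    (hcomm c hc _ (hlift d))

theorem ker_inf_commutator_eq_bot (hH2 : Subsingleton (schurMultiplier H))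
    (hCq : C.map q = ⊤) (hC : C ≤ Subgroup.centralizer q.ker) : q.ker ⊓ ⁅C, C⁆ = ⊥ := by
  obtain ⟨φ, hφC, hqφ⟩ := exists_freeGroup_hom_range_le hCq
  have hφK : (presentationKernel H).map φ ≤ q.ker := by
    rintro _ ⟨w, hw, rfl⟩
    rwa [MonoidHom.mem_ker, ← MonoidHom.comp_apply, hqφ]
  have hden : (hopfDenominator H).map φ = ⊥ :=
    map_hopfDenominator_eq_bot φ (hφC.trans (hC.trans (Subgroup.centralizer_le hφK)))
  refine eq_bot_iff.mpr fun a ⟨haq, haC⟩ ↦ ?_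
  obtain ⟨w, hwF, rfl⟩ := commutator_le_map_commutator hC φ hφC hqφ haC
  have hwK : w ∈ presentationKernel H := by
    rwa [presentationKernel, MonoidHom.mem_ker, ← hqφ]
  exact hden ▸ Subgroup.mem_map_of_mem φ (hopfNumerator_le_hopfDenominator hH2 ⟨hwK, hwF⟩)

end CentralExtension

theorem Subgroup.finiteIndex_centralizer_of_finite {G : Type*} [Group G] (N : Subgroup G)
    [N.Normal] [Finite N] : (Subgroup.centralizer (N : Set G)).FiniteIndex := by
  have : Finite (MulAut N) := Finite.of_injective _ DFunLike.coe_injective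
  refine Subgroup.finiteIndex_of_le (H := (MulAut.conjNormal : G →* MulAut N).ker) fun g hg ↦ ?_
  refine Subgroup.mem_centralizer_iff.mpr fun n hn ↦ ?_
  have hconj : g * n * g⁻¹ = n := congrArg (fun e : MulAut N ↦ (e ⟨n, hn⟩ : G)) hg
  calc n * g = g * n * g⁻¹ * g := by rw [hconj]
    _ = g * n := by group

theorem QuotientGroup.finite_map_mk' {G : Type*} [Group G] {U R : Subgroup G} [U.Normal]
    (hUR : U ≤ R) [(U.subgroupOf R).FiniteIndex] : Finite (R.map (QuotientGroup.mk' U)) := by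
  refine Nat.finite_of_card_ne_zero ?_
  rw [← Subgroup.relIndex_bot_left, ← QuotientGroup.map_mk'_self U, Subgroup.relIndex_map_map,
    QuotientGroup.ker_mk', sup_idem, sup_eq_left.mpr hUR]
  exact Subgroup.FiniteIndex.index_ne_zero

theorem exists_finiteIndex_ker_inf_eq_bot {G H : Type} [Group G] [Group H] {q : G →* H}
    (hq : Function.Surjective q) [Finite q.ker] (hH1 : NoNontrivialFiniteQuotients H)
    (hperf : commutator H = ⊤) (hH2 : Subsingleton (schurMultiplier H)) :
    ∃ D : Subgroup G, D.FiniteIndex ∧ q.ker ⊓ D = ⊥ := by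
  set C := Subgroup.centralizer (q.ker : Set G)
  have : C.FiniteIndex := q.ker.finiteIndex_centralizer_of_finite
  have hCq : C.map q = ⊤ := by
    have : (C.map q).FiniteIndex :=
      ⟨ne_zero_of_dvd_ne_zero Subgroup.FiniteIndex.index_ne_zero (Subgroup.index_map_dvd C hq)⟩
    exact hH1.eq_top_of_finiteIndex _
  refine ⟨⁅C, C⁆, ?_, ker_inf_commutator_eq_bot hH2 hCq le_rfl⟩
  have hsup : q.ker ⊔ ⁅C, C⁆ = ⊤ := by
    rw [sup_comm, ← Subgroup.comap_map_eq, Subgroup.map_commutator, hCq, ← commutator_def, hperf,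
      Subgroup.comap_top]
  refine ⟨?_⟩
  rw [← Subgroup.relIndex_top_right, ← hsup, Subgroup.relIndex_sup_right]
  exact Subgroup.FiniteIndex.index_ne_zero

/-- Let `L` be finitely generated, `R ◁ L` with `H = L/R` having no
nontrivial finite quotients and `H₂(H, ℤ) = 0`.  Then for every subgroup `U ≤ R` which is
normal in `L` and of finite index in `R`, there is a finite-index subgroup `V` of `L`
with `V ∩ R ≤ U`. -/
theorem exists_finiteIndex_inf_le {L : Type} [Group L] (hfg : Group.FG L)
    (R : Subgroup L) [R.Normal]
    (hH1 : ∀ (F : Type) [Group F] [Finite F] (f : (L ⧸ R) →* F), f = 1)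
    (hH2 : Subsingleton (schurMultiplier (L ⧸ R)))
    (U : Subgroup L) [U.Normal] (hUR : U ≤ R) (hfin : (U.subgroupOf R).FiniteIndex) :
    ∃ V : Subgroup L, V.FiniteIndex ∧ V ⊓ R ≤ U := by
  have : Group.FG (L ⧸ R) := Group.fg_of_surjective (QuotientGroup.mk'_surjective R)
  have hq := QuotientGroup.map_surjective_of_surjective U R (.id L) QuotientGroup.mk_surjective hUR
  have hker := QuotientGroup.ker_map U R (.id L) hUR
  rw [Subgroup.comap_id] at hker
  have : Finite (QuotientGroup.map U R (.id L) hUR).ker := hker ▸ QuotientGroup.finite_map_mk' hUR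
  obtain ⟨D, hD, hqD⟩ := exists_finiteIndex_ker_inf_eq_bot hq hH1
    (NoNontrivialFiniteQuotients.commutator_eq_top hH1) hH2
  refine ⟨D.comap (QuotientGroup.mk' U), ?_, fun x ⟨hxD, hxR⟩ ↦ ?_⟩
  · exact ⟨(Subgroup.index_comap_of_surjective D (QuotientGroup.mk'_surjective U)).trans_ne
      hD.index_ne_zero⟩
  · have hx : (x : L ⧸ U) ∈ (QuotientGroup.map U R (.id L) hUR).ker ⊓ D :=
      ⟨hker ▸ ⟨x, hxR, rfl⟩, hxD⟩
    rw [hqD] at hx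
    exact (QuotientGroup.eq_one_iff x).mp hx
end

section
/- Let L be a finitely generated group and N a normal subgroup of L that is the normal closure in L of a finite subset (this holds in particular when the quotient L/N is finitely presented). Then the fiber product P = {(x, y) ∈ L × L : x⁻¹y ∈ N} is a finitely generated subgroup of L × L. -/
/-- If `L` is a finitely generated group and `N ◁ L` is the normal closure
of a finite subset of `L`, then the fiber product `P = {(x, y) ∈ L × L | x⁻¹y ∈ N}` is a
finitely generated subgroup of `L × L`. -/
theorem fiberProduct_fg {L : Type} [Group L] (hfg : Group.FG L)
    (N : Subgroup L) [N.Normal]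
    (hN : ∃ S : Finset L, N = Subgroup.normalClosure (S : Set L)) :
    (fiberProduct N).FG := by
  classical
  obtain ⟨S, hS⟩ := hN
  obtain ⟨T, hT⟩ := hfg.out
  refine ⟨T.image (fun x => (x, x)) ∪ S.image (fun s => ((1 : L), s)), ?_⟩
  set G := Subgroup.closure
      ((T.image (fun x => (x, x)) ∪ S.image (fun s => ((1 : L), s)) : Finset (L × L)) :
        Set (L × L)) with hG
  have hdiag : ∀ x : L, (x, x) ∈ G := by
    intro x
    have hle : (⊤ : Subgroup L) ≤
        G.comap ((MonoidHom.id L).prod (MonoidHom.id L)) := by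
      rw [← hT, Subgroup.closure_le]
      intro t ht
      simp only [SetLike.mem_coe, Subgroup.mem_comap, MonoidHom.prod_apply, MonoidHom.id_apply]
      exact Subgroup.subset_closure (by
        simp only [Finset.coe_union, Finset.coe_image, Set.mem_union, Set.mem_image,
          Finset.mem_coe]
        exact Or.inl ⟨t, ht, rfl⟩)
    simpa using hle (Subgroup.mem_top x)
  have hone : ∀ n ∈ N, ((1 : L), n) ∈ G := by
    intro n hn
    have hle : N ≤ G.comap (MonoidHom.inr L L) := by
      rw [hS]
      show Subgroup.closure (Group.conjugatesOfSet (S : Set L)) ≤ _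
      rw [Subgroup.closure_le]
      intro c hc
      obtain ⟨b, hb, hconj⟩ := Group.mem_conjugatesOfSet_iff.1 hc
      obtain ⟨u, rfl⟩ := isConj_iff.1 hconj
      simp only [SetLike.mem_coe, Subgroup.mem_comap, MonoidHom.inr_apply]
      have hb1 : ((1 : L), b) ∈ G :=
        Subgroup.subset_closure
          (by
            simp only [Finset.coe_union, Finset.coe_image, Set.mem_union, Set.mem_image,
              Finset.mem_coe]
            exact Or.inr ⟨b, hb, rfl⟩)
      have : ((1 : L), u * b * u⁻¹) = (u, u) * ((1 : L), b) * (u, u)⁻¹ := by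
        simp [Prod.ext_iff, mul_assoc]
      rw [this]
      exact G.mul_mem (G.mul_mem (hdiag u) hb1) (G.inv_mem (hdiag u))
    exact hle hn
  apply le_antisymm
  · rw [Subgroup.closure_le]
    intro p hp
    simp only [Finset.coe_union, Finset.coe_image, Set.mem_union, Set.mem_image,
      Finset.mem_coe] at hp
    rcases hp with ⟨x, _, rfl⟩ | ⟨s, hs, rfl⟩
    · show x⁻¹ * x ∈ N
      simp [N.one_mem]
    · show (1 : L)⁻¹ * s ∈ N
      rw [inv_one, one_mul, hS]
      exact Subgroup.subset_normalClosure hs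
  · intro p hp
    have hmem : p.1⁻¹ * p.2 ∈ N := hp
    have : p = (p.1, p.1) * ((1 : L), p.1⁻¹ * p.2) := by
      simp [Prod.ext_iff]
    rw [this]
    exact G.mul_mem (hdiag p.1) (hone _ hmem)
end

section
/- Let L be a group, R a normal subgroup of L, and U a normal subgroup of L with U ≤ R and [R : U] finite. Let U^L denote the intersection of all finite-index subgroups of L that contain U. Then the commutator subgroup ⁅U^L, R⁆ is contained in U; that is, U^L acts trivially on R/U by conjugation. -/
/-- The closure of a subgroup `U` in the profinite topology of `L`: the intersection of
all finite-index subgroups of `L` containing `U`. -/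
def profClosure {L : Type*} [Group L] (U : Subgroup L) : Subgroup L :=
  ⨅ V ∈ {V : Subgroup L | V.FiniteIndex ∧ U ≤ V}, V

/-!
Pass to `L ⧸ U`, where the image of `R` is a finite normal subgroup. Its centralizer is the
kernel of the conjugation action on it, hence of finite index, and so is the preimage `K` of
that centralizer in `L`. Since `U ≤ K`, the closure `U^L` lies in `K`; and `⁅K, R⁆` maps to
the trivial subgroup of `L ⧸ U`, i.e. lies in `U`.
-/

namespace Subgroup

variable {G G' : Type*} [Group G] [Group G']

theorem finiteIndex_centralizer_of_finite_s4 (N : Subgroup G) [N.Normal] [Finite N] :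
    (centralizer (N : Set G)).FiniteIndex := by
  refine finiteIndex_of_le (H := (MulAut.conjNormal (H := N)).ker) fun g hg n hn => ?_
  have hgn := congrArg (fun e : MulAut N => (e ⟨n, hn⟩ : G)) hg
  simp only [MulAut.conjNormal_apply, MulAut.one_apply, mul_inv_eq_iff_eq_mul] at hgn
  exact hgn.symm

theorem finite_map_of_relIndex_ker_ne_zero (f : G →* G') (K : Subgroup G)
    (hK : f.ker.relIndex K ≠ 0) : Finite (K.map f) :=
  Nat.finite_of_card_ne_zero (relIndex_ker K f ▸ hK)

theorem commutator_comap_centralizer_map_le_ker (f : G →* G') (K : Subgroup G) :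
    ⁅(centralizer (K.map f : Set G')).comap f, K⁆ ≤ f.ker := by
  rw [← map_eq_bot_iff, map_commutator, eq_bot_iff]
  calc ⁅((centralizer (K.map f : Set G')).comap f).map f, K.map f⁆
      ≤ ⁅centralizer (K.map f : Set G'), K.map f⁆ := commutator_mono (map_comap_le _ _) le_rfl
    _ = ⊥ := commutator_eq_bot_iff_le_centralizer.mpr le_rfl

theorem exists_finiteIndex_le_commutator_le (R U : Subgroup G) [R.Normal] [U.Normal]
    (hUR : U.relIndex R ≠ 0) : ∃ K : Subgroup G, K.FiniteIndex ∧ U ≤ K ∧ ⁅K, R⁆ ≤ U := by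
  set f := QuotientGroup.mk' U
  have hf : Function.Surjective f := QuotientGroup.mk'_surjective U
  have : Finite (R.map f) :=
    finite_map_of_relIndex_ker_ne_zero f R (by rwa [QuotientGroup.ker_mk'])
  have : (R.map f).Normal := Normal.map ‹_› f hf
  have : (centralizer (R.map f : Set (G ⧸ U))).FiniteIndex :=
    finiteIndex_centralizer_of_finite_s4 _
  refine ⟨(centralizer (R.map f : Set (G ⧸ U))).comap f, ?_, ?_, ?_⟩
  · exact ⟨by rw [index_comap_of_surjective _ hf]; exact FiniteIndex.index_ne_zero⟩
  · exact (QuotientGroup.ker_mk' U).ge.trans (MonoidHom.ker_le_comap f _)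
  · exact (commutator_comap_centralizer_map_le_ker f R).trans (QuotientGroup.ker_mk' U).le

end Subgroup

theorem profClosure_le {L : Type*} [Group L] {U K : Subgroup L} [K.FiniteIndex] (hUK : U ≤ K) :
    profClosure U ≤ K :=
  iInf₂_le K ⟨‹_›, hUK⟩

theorem commutator_profClosure_le_general {L : Type} [Group L] (R U : Subgroup L)
    [R.Normal] [U.Normal] (hfin : (U.subgroupOf R).FiniteIndex) :
    ⁅profClosure U, R⁆ ≤ U := by
  obtain ⟨K, hK, hUK, hKR⟩ := Subgroup.exists_finiteIndex_le_commutator_le R U hfin.index_ne_zero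
  exact (Subgroup.commutator_mono (profClosure_le hUK) le_rfl).trans hKR

/-- Let `R ◁ L`, and `U ◁ L` with `U ≤ R` of finite index in `R`.  Then
`⁅U^L, R⁆ ≤ U`, where `U^L` is the closure of `U` in the profinite topology of `L`;
that is, `U^L` acts trivially on `R/U` by conjugation. -/
theorem commutator_profClosure_le {L : Type} [Group L] (R U : Subgroup L)
    [R.Normal] [U.Normal] (hUR : U ≤ R) (hfin : (U.subgroupOf R).FiniteIndex) :
    ⁅profClosure U, R⁆ ≤ U :=
  commutator_profClosure_le_general R U hfin
end

section
/- Let L be a group and R a normal subgroup of L such that every homomorphism from L/R to a finite group is trivial. Let U be a normal subgroup of L with U ≤ R and [R : U] finite, and let U^L be the intersection of all finite-index subgroups of L containing U. Then U^L · R = L, the index [L : U^L] is finite, and the image of U^L ∩ R in L/U is contained in the center of L/U. -/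
open Pointwise

section Aux

variable {L : Type} [Group L]

/-- If `L/R` has no nontrivial finite quotients, then any normal finite-index subgroup
satisfies `V ⊔ R = ⊤`. -/
theorem aux_join_eq_top (R : Subgroup L) [R.Normal]
    (hH : ∀ (F : Type) [Group F] [Finite F] (f : (L ⧸ R) →* F), f = 1)
    (V : Subgroup L) [V.Normal] [V.FiniteIndex] : V ⊔ R = ⊤ := by
  have hle : R ≤ (V ⊔ R).comap (MonoidHom.id L) := le_sup_right
  haveI : (V ⊔ R).FiniteIndex := Subgroup.finiteIndex_of_le le_sup_left
  have hf := hH (L ⧸ (V ⊔ R)) (QuotientGroup.map R (V ⊔ R) (MonoidHom.id L) hle)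
  rw [Subgroup.eq_top_iff']
  intro x
  have hx : QuotientGroup.map R (V ⊔ R) (MonoidHom.id L) hle (QuotientGroup.mk x) = 1 := by
    rw [hf]; rfl
  rw [QuotientGroup.map_mk] at hx
  simpa only [MonoidHom.id_apply, QuotientGroup.eq_one_iff] using hx

theorem aux_le (R : Subgroup L) [R.Normal]
    (hH : ∀ (F : Type) [Group F] [Finite F] (f : (L ⧸ R) →* F), f = 1)
    (V V' : Subgroup L) [V.Normal] [V'.Normal] [V.FiniteIndex] [V'.FiniteIndex]
    (h : V' ⊓ R ≤ V) : V' ≤ V := by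
  intro x hx
  have htop : (V ⊓ V') ⊔ R = ⊤ := aux_join_eq_top R hH (V ⊓ V')
  have hmem : x ∈ ((V ⊓ V' : Subgroup L) : Set L) * (R : Set L) := by
    rw [← Subgroup.mul_normal, htop]
    exact Set.mem_univ x
  obtain ⟨v, hv, r, hr, hvr⟩ := hmem
  have hrV' : r ∈ V' := by
    have : r = v⁻¹ * x := by rw [← hvr]; group
    rw [this]
    exact V'.mul_mem (V'.inv_mem hv.2) hx
  have hrV : r ∈ V := h ⟨hrV', hr⟩
  rw [← hvr]
  exact V.mul_mem hv.1 hrV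

end Aux

/-- Let `R ◁ L` with `L/R` having no nontrivial finite quotients, and
let `U ◁ L` with `U ≤ R` of finite index in `R`.  Then `U^L · R = L`, the index
`[L : U^L]` is finite, and the image of `U^L ∩ R` in `L/U` is central in `L/U`. -/
theorem profClosure_mul_eq_top {L : Type} [Group L] (R : Subgroup L) [R.Normal]
    (hH : ∀ (F : Type) [Group F] [Finite F] (f : (L ⧸ R) →* F), f = 1)
    (U : Subgroup L) [U.Normal] (hUR : U ≤ R) (hfin : (U.subgroupOf R).FiniteIndex) :
    (profClosure U : Set L) * (R : Set L) = Set.univ ∧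
    (profClosure U).FiniteIndex ∧
    Subgroup.map (QuotientGroup.mk' U) (profClosure U ⊓ R) ≤ Subgroup.center (L ⧸ U) := by
  haveI := hfin
  classical
  set S : Set (Subgroup L) := {V | V.Normal ∧ V.FiniteIndex ∧ U ≤ V} with hS
  -- the target type is finite
  haveI : Finite (R ⧸ U.subgroupOf R) := inferInstance
  haveI : Finite (Subgroup (R ⧸ U.subgroupOf R)) :=
    Finite.of_injective (fun H => (H : Set (R ⧸ U.subgroupOf R))) SetLike.coe_injective
  -- S is a finite set
  have hinj : ∀ V ∈ S, ∀ V' ∈ S, V ⊓ R = V' ⊓ R → V = V' := by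
    intro V hV V' hV' h
    haveI := hV.1; haveI := hV.2.1; haveI := hV'.1; haveI := hV'.2.1
    refine le_antisymm ?_ ?_
    · exact aux_le R hH V' V (h.le.trans inf_le_left)
    · exact aux_le R hH V V' (h.symm.le.trans inf_le_left)
  have hSfin : S.Finite := by
    apply Set.Finite.of_finite_image (f := fun V =>
      Subgroup.map (QuotientGroup.mk' (U.subgroupOf R)) ((V ⊓ R).subgroupOf R))
    · exact Set.toFinite _
    · intro V hV V' hV' heq
      apply hinj V hV V' hV'
      have hker : ∀ W ∈ S, (QuotientGroup.mk' (U.subgroupOf R)).ker ≤ (W ⊓ R).subgroupOf R := by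
        intro W hW
        rw [QuotientGroup.ker_mk']
        exact fun x hx => ⟨hW.2.2 hx, x.2⟩
      have h1 : (V ⊓ R).subgroupOf R = (V' ⊓ R).subgroupOf R :=
        Subgroup.map_injective_of_ker_le _ (hker V hV) (hker V' hV') heq
      have h2 := congrArg (Subgroup.map R.subtype) h1
      rwa [Subgroup.subgroupOf_map_subtype, Subgroup.subgroupOf_map_subtype,
        inf_assoc, inf_idem, inf_assoc, inf_idem] at h2
  haveI hSfinite : Finite S := hSfin
  -- profClosure U equals the infimum over S
  have key : profClosure U = ⨅ V ∈ S, V := by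
    refine le_antisymm (le_iInf₂ fun V hV => ?_) (le_iInf₂ fun V hV => ?_)
    · exact iInf₂_le V ⟨hV.2.1, hV.2.2⟩
    · haveI := hV.1
      refine le_trans (iInf₂_le V.normalCore ⟨V.normalCore_normal, ?_, ?_⟩) V.normalCore_le
      · exact Subgroup.finiteIndex_normalCore V
      · exact Subgroup.normal_le_normalCore.mpr hV.2
  have keyS : profClosure U = ⨅ (V : S), (V : Subgroup L) := by
    rw [key]; exact (iInf_subtype'' S _).symm
  haveI hWfin : (profClosure U).FiniteIndex := by
    rw [keyS]
    exact Subgroup.finiteIndex_iInf fun V => V.2.2.1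
  haveI hWnormal : (profClosure U).Normal := by
    rw [keyS]
    constructor
    intro n hn g
    rw [Subgroup.mem_iInf] at hn ⊢
    intro V
    exact (V.2.1).conj_mem n (hn V) g
  -- Part 1
  have htop : profClosure U ⊔ R = ⊤ := aux_join_eq_top R hH _
  have part1 : (profClosure U : Set L) * (R : Set L) = Set.univ := by
    rw [← Subgroup.mul_normal, htop, Subgroup.coe_top]
  -- Part 3 setup: conjugation action on the finite normal subgroup `R/U` of `L/U`
  set R' : Subgroup (L ⧸ U) := R.map (QuotientGroup.mk' U) with hR'
  haveI : R'.Normal := Subgroup.Normal.map ‹R.Normal› _ (QuotientGroup.mk'_surjective U)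
  haveI : Finite R' := by
    set g : R →* L ⧸ U := (QuotientGroup.mk' U).comp R.subtype with hg
    have hker : g.ker = U.subgroupOf R := by
      ext x
      simp [hg, MonoidHom.mem_ker, QuotientGroup.eq_one_iff, Subgroup.mem_subgroupOf]
    have hrange : g.range = R' := by
      rw [hg, MonoidHom.range_comp, Subgroup.range_subtype]
    haveI : Finite (R ⧸ g.ker) := by rw [hker]; infer_instance
    haveI : Finite g.range := Finite.of_equiv _ (QuotientGroup.quotientKerEquivRange g).toEquiv
    exact hrange ▸ ‹Finite g.range›
  haveI : Finite (MulAut R') :=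
    Finite.of_injective (fun e => (e : R' → R')) DFunLike.coe_injective
  set ψ : L →* MulAut R' := MulAut.conjNormal.comp (QuotientGroup.mk' U) with hψ
  have hUK : U ≤ ψ.ker := by
    intro u hu
    rw [MonoidHom.mem_ker]
    ext x
    show ((MulAut.conjNormal (QuotientGroup.mk u) : MulAut R') x : L ⧸ U) = (x : L ⧸ U)
    obtain ⟨y, hy⟩ := x
    obtain ⟨r, hr, rfl⟩ := hy
    rw [MulAut.conjNormal_apply]
    show (QuotientGroup.mk u : L ⧸ U) * QuotientGroup.mk r * (QuotientGroup.mk u)⁻¹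
      = QuotientGroup.mk r
    rw [← QuotientGroup.mk_inv, ← QuotientGroup.mk_mul, ← QuotientGroup.mk_mul]
    rw [QuotientGroup.eq]
    have : (u * r * u⁻¹)⁻¹ * r = u * (r⁻¹ * u⁻¹ * r) := by group
    rw [this]
    exact U.mul_mem hu (Subgroup.Normal.conj_mem' ‹U.Normal› u⁻¹ (U.inv_mem hu) r)
  haveI : ψ.ker.FiniteIndex := Subgroup.finiteIndex_ker ψ
  have hWK : profClosure U ≤ ψ.ker := iInf₂_le ψ.ker ⟨‹ψ.ker.FiniteIndex›, hUK⟩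
  -- commutation lemma: anything in ψ.ker commutes mod U with anything in R
  have hcomm : ∀ w ∈ ψ.ker, ∀ r ∈ R,
      (QuotientGroup.mk w : L ⧸ U) * QuotientGroup.mk r
        = QuotientGroup.mk r * QuotientGroup.mk w := by
    intro w hw r hr
    have h1 : ψ w = 1 := hw
    have h2 := congrArg (fun e : MulAut R' => ((e ⟨QuotientGroup.mk r,
      Subgroup.mem_map_of_mem _ hr⟩ : R') : L ⧸ U)) h1
    simp only [hψ, MonoidHom.comp_apply, QuotientGroup.mk'_apply] at h2
    rw [MulAut.conjNormal_apply] at h2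
    have h3 : (QuotientGroup.mk w : L ⧸ U) * QuotientGroup.mk r * (QuotientGroup.mk w)⁻¹
        = QuotientGroup.mk r := h2
    calc (QuotientGroup.mk w : L ⧸ U) * QuotientGroup.mk r
        = ((QuotientGroup.mk w : L ⧸ U) * QuotientGroup.mk r * (QuotientGroup.mk w)⁻¹)
          * QuotientGroup.mk w := by group
      _ = QuotientGroup.mk r * QuotientGroup.mk w := by rw [h3]
  refine ⟨part1, hWfin, ?_⟩
  intro q hq
  obtain ⟨t, ht, rfl⟩ := hq
  rw [Subgroup.mem_center_iff]
  intro g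
  obtain ⟨l, rfl⟩ := QuotientGroup.mk_surjective g
  have hl : l ∈ (profClosure U : Set L) * (R : Set L) := by rw [part1]; exact Set.mem_univ l
  obtain ⟨w, hw, r, hr, rfl⟩ := hl
  have c1 : (QuotientGroup.mk w : L ⧸ U) * QuotientGroup.mk t
      = QuotientGroup.mk t * QuotientGroup.mk w := hcomm w (hWK hw) t ht.2
  have c2 : (QuotientGroup.mk t : L ⧸ U) * QuotientGroup.mk r
      = QuotientGroup.mk r * QuotientGroup.mk t := hcomm t (hWK ht.1) r hr
  show (QuotientGroup.mk (w * r) : L ⧸ U) * QuotientGroup.mk t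
      = QuotientGroup.mk t * QuotientGroup.mk (w * r)
  rw [QuotientGroup.mk_mul, mul_assoc, ← c2, ← mul_assoc, c1, mul_assoc]
end

section
/- Let L be a finitely generated group and R a normal subgroup of L such that every homomorphism from L/R to a finite group is trivial. Let U be a normal subgroup of L with U ≤ R and [R : U] finite, and let U^L be the intersection of all finite-index subgroups of L containing U. Then the quotient group U^L/U is perfect; equivalently, ⁅U^L, U^L⁆ · U = U^L. -/
open Subgroup

universe u

section FiniteQuotients

variable {G : Type*} [Group G]

theorem finite_monoidHom_of_fg {F : Type*} [Group F] [Finite F] [hG : Group.FG G] :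
    Finite (G →* F) := by
  obtain ⟨T, hT⟩ := Group.fg_def.mp hG
  refine Finite.of_injective (fun f : G →* F => fun t : T => f t) fun f g hfg => ?_
  exact MonoidHom.eq_of_eqOn_dense hT fun x hx => congrFun hfg ⟨x, hx⟩

theorem Subgroup.exists_ker_le_of_index_le {V : Subgroup G} {k : ℕ} (hV : V.index ≠ 0)
    (hVk : V.index ≤ k) : ∃ ψ : G →* Equiv.Perm (Fin k), ψ.ker ≤ V := by
  have : Finite (G ⧸ V) := finiteIndex_iff_finite_quotient.mp ⟨hV⟩
  have : Fintype (G ⧸ V) := Fintype.ofFinite _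
  obtain ⟨e⟩ : Nonempty (G ⧸ V ↪ Fin k) := Function.Embedding.nonempty_of_card_le <| by
    rwa [Fintype.card_fin, ← Nat.card_eq_fintype_card, ← index_eq_card]
  refine ⟨(Equiv.Perm.viaEmbeddingHom e).comp (MulAction.toPermHom G (G ⧸ V)), ?_⟩
  rw [MonoidHom.ker_comp_of_injective _ _ (Equiv.Perm.viaEmbeddingHom_injective e),
    ← normalCore_eq_ker]
  exact V.normalCore_le

theorem Subgroup.finiteIndex_iInf_of_index_le [Group.FG G] {S : Set (Subgroup G)} {k : ℕ}
    (hS : ∀ V ∈ S, V.index ≠ 0 ∧ V.index ≤ k) : (⨅ V ∈ S, V).FiniteIndex := by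
  have : Finite (G →* Equiv.Perm (Fin k)) := finite_monoidHom_of_fg
  set K := ⨅ ψ : G →* Equiv.Perm (Fin k), ψ.ker
  have : K.FiniteIndex := finiteIndex_iInf fun ψ => finiteIndex_ker ψ
  refine finiteIndex_of_le (H := K) (le_iInf₂ fun V hV => ?_)
  obtain ⟨ψ, hψ⟩ := exists_ker_le_of_index_le (hS V hV).1 (hS V hV).2
  exact (iInf_le _ ψ).trans hψ

end FiniteQuotients

section Coatoms

variable {G : Type*} [Group G]

theorem Subgroup.isCompactElement_closure_singleton (g : G) :
    IsCompactElement (closure {g}) := by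
  rw [CompleteLattice.isCompactElement_iff_le_of_directed_sSup_le]
  intro s hs hdir hle
  obtain ⟨V, hV, hg⟩ := (mem_sSup_of_directedOn hs hdir).mp (hle (mem_closure_singleton_self g))
  exact ⟨V, hV, (closure_le V).mpr (Set.singleton_subset_iff.mpr hg)⟩

theorem Subgroup.closure_finset_eq_sup (T : Finset G) :
    closure (T : Set G) = T.sup fun g => closure {g} := by
  refine le_antisymm ((closure_le _).mpr fun g hg => ?_) (Finset.sup_le fun g hg => ?_)
  · exact Finset.le_sup (f := fun g => closure {g}) hg (mem_closure_singleton_self g)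
  · exact closure_mono (Set.singleton_subset_iff.mpr hg)

instance Subgroup.isCoatomic_of_fg [hG : Group.FG G] : IsCoatomic (Subgroup G) := by
  obtain ⟨T, hT⟩ := Group.fg_def.mp hG
  refine CompleteLattice.coatomic_of_top_compact ?_
  rw [← hT, closure_finset_eq_sup]
  exact CompleteLattice.isCompactElement_finsetSup T fun g _ =>
    isCompactElement_closure_singleton g

open scoped IsMulCommutative in
-- A commutative simple group is cyclic of prime order.
theorem Subgroup.finiteIndex_of_isCoatom_of_commutator_le {M : Subgroup G} (hM : IsCoatom M)
    (hcomm : _root_.commutator G ≤ M) : M.FiniteIndex := by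
  have := Normal.of_commutator_le G hcomm
  have : IsMulCommutative (G ⧸ M) := Normal.quotient_commutative_iff_commutator_le.mpr hcomm
  have : IsSimpleOrder (Subgroup (G ⧸ M)) :=
    (OrderIso.isSimpleOrder_iff (β := Set.Ici M) (QuotientGroup.comapMk'OrderIso M)).mpr
      (Set.isSimpleOrder_Ici_iff_isCoatom.mpr hM)
  have : Nontrivial (G ⧸ M) := nontrivial_iff.mp inferInstance
  have : IsSimpleGroup (G ⧸ M) := ⟨fun N _ => IsSimpleOrder.eq_bot_or_eq_top N⟩
  have := IsSimpleGroup.finite (α := G ⧸ M)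
  exact finiteIndex_of_finite_quotient

theorem Subgroup.exists_finiteIndex_ne_top_of_commutator_le [Group.FG G] {H : Subgroup G}
    (hcomm : _root_.commutator G ≤ H) (hH : H ≠ ⊤) : ∃ M, H ≤ M ∧ M ≠ ⊤ ∧ M.FiniteIndex := by
  obtain ⟨M, hM, hHM⟩ := (eq_top_or_exists_le_coatom H).resolve_left hH
  exact ⟨M, hHM, hM.1, finiteIndex_of_isCoatom_of_commutator_le hM (hcomm.trans hHM)⟩

end Coatoms

section ProfiniteClosure

variable {L : Type*} [Group L]

theorem le_profClosure (U : Subgroup L) : U ≤ profClosure U :=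
  le_iInf₂ fun _ hV => hV.2

theorem profClosure_le_s6 {U V : Subgroup L} [hV : V.FiniteIndex] (hUV : U ≤ V) :
    profClosure U ≤ V :=
  iInf₂_le V ⟨hV, hUV⟩

theorem commutator_profClosure_sup_eq [Group.FG L] {U : Subgroup L}
    [hW : (profClosure U).FiniteIndex] :
    ⁅profClosure U, profClosure U⁆ ⊔ U = profClosure U := by
  set W := profClosure U
  refine le_antisymm (sup_le W.commutator_le_self (le_profClosure U)) ?_
  have : Group.FG W := fg_of_index_ne_zero W
  set X := (⁅W, W⁆ ⊔ U).subgroupOf W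
  suffices X = ⊤ from subgroupOf_eq_top.mp this
  have hcomm : _root_.commutator W ≤ X :=
    map_le_iff_le_comap.mp (W.map_subtype_commutator.trans_le le_sup_left)
  by_contra hX
  obtain ⟨M, hXM, hM, hMfi⟩ := exists_finiteIndex_ne_top_of_commutator_le hcomm hX
  have : (M.map W.subtype).FiniteIndex :=
    ⟨by rw [index_map_subtype]; exact mul_ne_zero hMfi.index_ne_zero hW.index_ne_zero⟩
  have hUM : U ≤ M.map W.subtype := fun u hu =>
    ⟨⟨u, le_profClosure U hu⟩, hXM (mem_subgroupOf.mpr (mem_sup_right hu)), rfl⟩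
  refine hM (eq_top_iff.mpr fun x _ => ?_)
  obtain ⟨y, hy, hyx⟩ := profClosure_le_s6 hUM x.2
  rwa [Subtype.ext hyx] at hy

end ProfiniteClosure

section NoFiniteQuotients

variable {L : Type u} [Group L] {R : Subgroup L} [R.Normal]

-- `L ⧸ R` acts on the finite set `L ⧸ N`, and that action must be trivial.
theorem eq_top_of_le_of_finiteIndex
    (hH : ∀ (F : Type u) [Group F] [Finite F] (f : (L ⧸ R) →* F), f = 1)
    {N : Subgroup L} [N.FiniteIndex] (hRN : R ≤ N) : N = ⊤ := by
  have hR : R ≤ (MulAction.toPermHom L (L ⧸ N)).ker := by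
    rw [← normalCore_eq_ker]; exact normal_le_normalCore.mpr hRN
  have := hH _ (QuotientGroup.lift R _ hR)
  refine eq_top_iff.mpr fun x _ => N.normalCore_le ?_
  rw [normalCore_eq_ker, MonoidHom.mem_ker]
  simpa using DFunLike.congr_fun this (x : L ⧸ R)

theorem index_dvd_relIndex_of_le
    (hH : ∀ (F : Type u) [Group F] [Finite F] (f : (L ⧸ R) →* F), f = 1)
    {U V : Subgroup L} [U.Normal] [V.FiniteIndex] (hUV : U ≤ V) : V.index ∣ U.relIndex R := by
  have : (R ⊔ V.normalCore).FiniteIndex := finiteIndex_of_le le_sup_right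
  calc V.index ∣ V.normalCore.index := index_dvd_of_le V.normalCore_le
    _ = V.normalCore.relIndex R := by
      have hRV := eq_top_of_le_of_finiteIndex hH (N := R ⊔ V.normalCore) le_sup_left
      rw [← relIndex_top_right, ← hRV, relIndex_sup_right]
    _ ∣ U.relIndex R := relIndex_dvd_of_le_left R (normal_le_normalCore.mpr hUV)

theorem finiteIndex_profClosure [Group.FG L]
    (hH : ∀ (F : Type u) [Group F] [Finite F] (f : (L ⧸ R) →* F), f = 1)
    {U : Subgroup L} [U.Normal] (hU : U.relIndex R ≠ 0) : (profClosure U).FiniteIndex :=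
  finiteIndex_iInf_of_index_le fun _ ⟨hV, hUV⟩ =>
    ⟨hV.index_ne_zero, Nat.le_of_dvd (Nat.pos_of_ne_zero hU) (index_dvd_relIndex_of_le hH hUV)⟩

end NoFiniteQuotients

theorem profClosure_quotient_perfect_general {L : Type} [Group L] (hfg : Group.FG L)
    (R : Subgroup L) [R.Normal]
    (hH : ∀ (F : Type) [Group F] [Finite F] (f : (L ⧸ R) →* F), f = 1)
    (U : Subgroup L) [U.Normal] (hfin : (U.subgroupOf R).FiniteIndex) :
    ⁅profClosure U, profClosure U⁆ ⊔ U = profClosure U := by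
  have := finiteIndex_profClosure hH hfin.index_ne_zero
  exact commutator_profClosure_sup_eq

/-- Let `L` be finitely generated, `R ◁ L` with `L/R` having no
nontrivial finite quotients, and `U ◁ L` with `U ≤ R` of finite index in `R`.  Then the
quotient `U^L / U` is perfect; equivalently `⁅U^L, U^L⁆ · U = U^L`. -/
theorem profClosure_quotient_perfect {L : Type} [Group L] (hfg : Group.FG L)
    (R : Subgroup L) [R.Normal]
    (hH : ∀ (F : Type) [Group F] [Finite F] (f : (L ⧸ R) →* F), f = 1)
    (U : Subgroup L) [U.Normal] (hUR : U ≤ R) (hfin : (U.subgroupOf R).FiniteIndex) :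
    ⁅profClosure U, profClosure U⁆ ⊔ U = profClosure U :=
  profClosure_quotient_perfect_general hfg R hH U hfin
end

section
/- Let E be a group and C an abelian normal subgroup of E. If every homomorphism from the quotient E/C to a finite group is trivial, and the abelianization of E is trivial (i.e. E is perfect), then every homomorphism from E to a finite group is trivial. -/
/-- Let `C` be an abelian normal subgroup of a group `E`.  If every
homomorphism from `E/C` to a finite group is trivial and `E` is perfect (its
abelianization is trivial), then every homomorphism from `E` to a finite group is
trivial. -/
theorem finite_quotients_trivial_of_central {E : Type} [Group E]
    (C : Subgroup E) [C.Normal] (hab : ∀ a b : C, a * b = b * a)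
    (hq : ∀ (F : Type) [Group F] [Finite F] (f : (E ⧸ C) →* F), f = 1)
    (hperf : Subsingleton (Abelianization E)) :
    ∀ (F : Type) [Group F] [Finite F] (f : E →* F), f = 1 := by
  intro F _ _ f
  -- the image of C inside f.range, as a normal subgroup of f.range
  set N : Subgroup f.range := (C.map f).subgroupOf f.range with hNdef
  have hNnormal : N.Normal := by
    constructor
    rintro ⟨n, hn⟩ hnN ⟨g, e, rfl⟩
    rw [Subgroup.mem_subgroupOf] at hnN ⊢
    obtain ⟨c, hc, hfc⟩ := hnN
    refine ⟨e * c * e⁻¹, Subgroup.Normal.conj_mem ‹C.Normal› c hc e, ?_⟩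
    simpa using hfc
  -- the induced map E ⧸ C → f.range ⧸ N is trivial by hypothesis
  have hker : ∀ c ∈ C, ((QuotientGroup.mk' N).comp f.rangeRestrict) c = 1 := by
    intro c hc
    simp only [MonoidHom.comp_apply, QuotientGroup.mk'_apply,
      QuotientGroup.eq_one_iff]
    rw [Subgroup.mem_subgroupOf]
    exact ⟨c, hc, rfl⟩
  let g : (E ⧸ C) →* (f.range ⧸ N) :=
    QuotientGroup.lift C ((QuotientGroup.mk' N).comp f.rangeRestrict) hker
  have hg := hq (f.range ⧸ N) g
  -- hence f x ∈ C.map f for all x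
  have hrange : ∀ x : E, f x ∈ C.map f := by
    intro x
    have : g (x : E ⧸ C) = 1 := by rw [hg]; rfl
    have : ((QuotientGroup.mk' N) (f.rangeRestrict x)) = 1 := this
    rw [QuotientGroup.mk'_apply, QuotientGroup.eq_one_iff, Subgroup.mem_subgroupOf] at this
    exact this
  -- elements of C.map f commute
  have hcomm : ∀ y z : F, y ∈ C.map f → z ∈ C.map f → y * z = z * y := by
    rintro _ _ ⟨a, ha, rfl⟩ ⟨b, hb, rfl⟩
    rw [← map_mul, ← map_mul]
    have := hab ⟨a, ha⟩ ⟨b, hb⟩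
    have : a * b = b * a := congrArg Subtype.val this
    rw [this]
  -- commutator E ≤ ker f
  have hck : commutator E ≤ f.ker := by
    rw [commutator, Subgroup.commutator_le]
    intro a _ b _
    rw [MonoidHom.mem_ker]
    have h := hcomm (f a) (f b) (hrange a) (hrange b)
    rw [commutatorElement_def, map_mul, map_mul, map_mul, map_inv, map_inv, h]
    group
  -- commutator E = ⊤ since abelianization is trivial
  have htop : (⊤ : Subgroup E) ≤ f.ker := by
    intro x _
    have h1 : (Abelianization.of x : Abelianization E) = Abelianization.of (1 : E) :=
      Subsingleton.elim _ _
    have : x⁻¹ * 1 ∈ commutator E := by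
      have := (QuotientGroup.eq (s := commutator E)).mp h1
      exact this
    have hx : x ∈ commutator E := by
      simpa using (commutator E).inv_mem this
    exact hck hx
  ext x
  simpa [MonoidHom.mem_ker] using htop (Subgroup.mem_top x)
end

section
/- Let E be a group and C a subgroup of the center of E, and suppose the quotient H = E/C is perfect. Then the commutator subgroup E' = ⁅E, E⁆ maps onto H under the quotient map (equivalently E' · C = E), and E' is itself perfect (⁅E', E'⁆ = E'). -/
/-!
The image of `⁅E, E⁆` in `E ⧸ C` is `⁅E ⧸ C, E ⧸ C⁆ = E ⧸ C`, so `E = E' ⊔ C`. Since a commutator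
`⁅g, h⁆` does not change when `g` and `h` are multiplied by central elements,
`⁅E, E⁆ = ⁅E' ⊔ C, E' ⊔ C⁆ = ⁅E', E'⁆`.
-/

open scoped commutatorElement

namespace Subgroup

variable {G G' : Type*} [Group G] [Group G']

lemma map_commutator_of_surjective {f : G →* G'} (hf : Function.Surjective f) :
    (_root_.commutator G).map f = _root_.commutator G' := by
  rw [map_commutator_eq, f.range_eq_top.mpr hf, ← _root_.commutator_def]

lemma sup_ker_eq_top_of_map_eq_top {f : G →* G'} {K : Subgroup G} (h : K.map f = ⊤) :
    K ⊔ f.ker = ⊤ := by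
  rw [← comap_map_eq, h, comap_top]

lemma normal_of_le_center {C : Subgroup G} (hC : C ≤ center G) : C.Normal :=
  ⟨fun n hn g => by rwa [mem_center_iff.mp (hC hn) g, mul_inv_cancel_right]⟩

lemma commutatorElement_mul_mul_of_mem_center {c d : G} (hc : c ∈ center G)
    (hd : d ∈ center G) (g h : G) : ⁅g * c, h * d⁆ = ⁅g, h⁆ := by
  have hc' : Commute c (h * d) := (mem_center_iff.mp hc _).symm
  have hd' : Commute d g⁻¹ := (mem_center_iff.mp hd _).symm
  calc ⁅g * c, h * d⁆ = g * h * (h⁻¹ * (c * (h * d) * c⁻¹) * d⁻¹) * (d * g⁻¹ * d⁻¹) * h⁻¹ := by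
        group
    _ = ⁅g, h⁆ := by rw [hc'.mul_inv_cancel, hd'.mul_inv_cancel]; group

lemma commutator_sup_eq_of_le_center {C : Subgroup G} (hC : C ≤ center G) (H₁ H₂ : Subgroup G) :
    ⁅H₁ ⊔ C, H₂ ⊔ C⁆ = ⁅H₁, H₂⁆ := by
  have := normal_of_le_center hC
  refine le_antisymm ?_ (commutator_mono le_sup_left le_sup_left)
  rw [commutator_le]
  rintro _ hx _ hy
  obtain ⟨g, hg, c, hc, rfl⟩ := mem_sup_of_normal_right.mp hx
  obtain ⟨h, hh, d, hd, rfl⟩ := mem_sup_of_normal_right.mp hy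
  rw [commutatorElement_mul_mul_of_mem_center (hC hc) (hC hd)]
  exact commutator_mem_commutator hg hh

end Subgroup

/-- Let `C` be a central subgroup of `E` with `H = E/C` perfect.  Then
the commutator subgroup `E' = ⁅E, E⁆` maps onto `H` under the quotient map (equivalently
`E' · C = E`), and `E'` is itself perfect. -/
theorem commutator_surjects_and_perfect {E : Type} [Group E]
    (C : Subgroup E) [C.Normal] (hC : C ≤ Subgroup.center E)
    (hperf : commutator (E ⧸ C) = ⊤) :
    Subgroup.map (QuotientGroup.mk' C) (commutator E) = ⊤ ∧
    commutator E ⊔ C = ⊤ ∧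
    ⁅commutator E, commutator E⁆ = commutator E := by
  have hmap : (commutator E).map (QuotientGroup.mk' C) = ⊤ := by
    rw [Subgroup.map_commutator_of_surjective (QuotientGroup.mk'_surjective C), hperf]
  have hsup : commutator E ⊔ C = ⊤ := by
    simpa only [QuotientGroup.ker_mk'] using Subgroup.sup_ker_eq_top_of_map_eq_top hmap
  refine ⟨hmap, hsup, ?_⟩
  rw [← Subgroup.commutator_sup_eq_of_le_center hC, hsup, ← commutator_def]
end

section
/- Let E be a group and C a subgroup of the center of E, and let Q = E/C. Then there is a surjective group homomorphism from H₂(Q, ℤ) onto the intersection C ∩ ⁅E, E⁆ of C with the commutator subgroup of E. In particular, C ∩ ⁅E, E⁆ is isomorphic to a quotient of H₂(Q, ℤ). -/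
/-!
Lift a set-theoretic section `q ↦ q.out` of `E → Q` to `φ : F = FreeGroup Q →* E`. Then `φ` carries
the relation subgroup `R` into `C`, and, since `C` is central, kills `[F, R]`; so it induces a map from
`(R ∩ [F, F]) / [F, R]` to `C ∩ [E, E]`. It is onto because every element of `E` is `φ` of a generator
up to a central factor, which commutators do not see, so `φ [F, F] = [E, E]`; and a preimage in
`[F, F]` of an element of `C` automatically lies in `R`.
-/

open scoped commutatorElement

section Commutator

variable {F G : Type*} [Group F] [Group G]

theorem commutatorElement_mul_mem_center {a b c d : G} (hc : c ∈ Subgroup.center G)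
    (hd : d ∈ Subgroup.center G) : ⁅a * c, b * d⁆ = ⁅a, b⁆ := by
  have conj_eq {z : G} (hz : z ∈ Subgroup.center G) (x : G) : z * x * z⁻¹ = x :=
    mul_inv_eq_of_eq_mul (Subgroup.mem_center_iff.mp hz x).symm
  calc ⁅a * c, b * d⁆ = a * (c * (b * d) * c⁻¹) * a⁻¹ * (d⁻¹ * b⁻¹) := by group
    _ = a * b * (d * a⁻¹ * d⁻¹) * b⁻¹ := by rw [conj_eq hc]; group
    _ = ⁅a, b⁆ := by rw [conj_eq hd, commutatorElement_def]

theorem map_commutator_le_commutator (φ : F →* G) : (commutator F).map φ ≤ commutator G := by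
  rw [map_commutator_eq]
  exact Subgroup.commutator_mono le_top le_top

theorem map_commutator_eq_of_surjective_mk_comp {Z : Subgroup G} [Z.Normal]
    (hZ : Z ≤ Subgroup.center G) (φ : F →* G)
    (hφ : Function.Surjective ((QuotientGroup.mk' Z).comp φ)) :
    (commutator F).map φ = commutator G := by
  refine (map_commutator_le_commutator φ).antisymm ?_
  rw [commutator_def, Subgroup.commutator_le]
  intro a _ b _
  have lift_mul_center : ∀ g : G, ∃ x : F, ∃ z ∈ Subgroup.center G, φ x = g * z := fun g ↦ by
    obtain ⟨x, hx⟩ := hφ g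
    exact ⟨x, g⁻¹ * φ x, hZ (QuotientGroup.eq.mp hx.symm), (mul_inv_cancel_left g _).symm⟩
  obtain ⟨x, c, hc, hx⟩ := lift_mul_center a
  obtain ⟨y, d, hd, hy⟩ := lift_mul_center b
  refine ⟨⁅x, y⁆, Subgroup.commutator_mem_commutator (Subgroup.mem_top x) (Subgroup.mem_top y), ?_⟩
  rw [map_commutatorElement, hx, hy, commutatorElement_mul_mem_center hc hd]

end Commutator

section CentralQuotient

variable {E : Type*} [Group E] (C : Subgroup E) [C.Normal]

noncomputable def liftOut : FreeGroup (E ⧸ C) →* E :=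
  FreeGroup.lift Quotient.out

theorem mk'_comp_liftOut : (QuotientGroup.mk' C).comp (liftOut C) = FreeGroup.lift id := by
  ext q
  simp [liftOut]

theorem liftOut_mem_iff {w : FreeGroup (E ⧸ C)} :
    liftOut C w ∈ C ↔ w ∈ presentationKernel (E ⧸ C) := by
  rw [← QuotientGroup.eq_one_iff, presentationKernel, MonoidHom.mem_ker, ← mk'_comp_liftOut]
  rfl

variable {C}

theorem hopfDenominator_le_ker_liftOut (hC : C ≤ Subgroup.center E) :
    hopfDenominator (E ⧸ C) ≤ (liftOut C).ker := by
  rw [← Subgroup.map_eq_bot_iff, hopfDenominator, Subgroup.map_commutator, ← le_bot_iff,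
    ← Subgroup.commutator_top_left_eq_bot_iff_le_center.mpr hC]
  refine Subgroup.commutator_mono le_top ?_
  rintro _ ⟨w, hw, rfl⟩
  exact (liftOut_mem_iff C).mpr hw

theorem map_liftOut_commutator (hC : C ≤ Subgroup.center E) :
    (commutator (FreeGroup (E ⧸ C))).map (liftOut C) = commutator E := by
  refine map_commutator_eq_of_surjective_mk_comp hC _ ?_
  rw [mk'_comp_liftOut]
  exact fun q ↦ ⟨FreeGroup.of q, FreeGroup.lift_apply_of⟩

variable (C)

noncomputable def hopfNumeratorToInfCommutator :
    hopfNumerator (E ⧸ C) →* ↥(C ⊓ commutator E) :=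
  ((liftOut C).comp (hopfNumerator (E ⧸ C)).subtype).codRestrict _ fun w ↦
    ⟨(liftOut_mem_iff C).mpr w.2.1,
      map_commutator_le_commutator (liftOut C) (Subgroup.mem_map_of_mem _ w.2.2)⟩

variable {C}

noncomputable def schurMultiplierToInfCommutator (hC : C ≤ Subgroup.center E) :
    schurMultiplier (E ⧸ C) →* ↥(C ⊓ commutator E) :=
  QuotientGroup.lift _ (hopfNumeratorToInfCommutator C) fun _ hw ↦
    Subtype.ext (hopfDenominator_le_ker_liftOut hC (Subgroup.mem_subgroupOf.mp hw))

theorem schurMultiplierToInfCommutator_surjective (hC : C ≤ Subgroup.center E) :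
    Function.Surjective (schurMultiplierToInfCommutator hC) := by
  rintro ⟨c, hcC, hcE⟩
  obtain ⟨w, hw, rfl⟩ := (map_liftOut_commutator hC).ge hcE
  exact ⟨QuotientGroup.mk ⟨w, (liftOut_mem_iff C).mp hcC, hw⟩, rfl⟩

end CentralQuotient

/-- Let `C` be a central subgroup of `E` and `Q = E/C`.  Then there is a
surjective homomorphism from `H₂(Q, ℤ)` onto `C ∩ ⁅E, E⁆`; in particular `C ∩ ⁅E, E⁆` is
a quotient of the Schur multiplier `H₂(Q, ℤ)`. -/
theorem schur_surjects_onto_inf_commutator {E : Type} [Group E]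
    (C : Subgroup E) [C.Normal] (hC : C ≤ Subgroup.center E) :
    ∃ f : schurMultiplier (E ⧸ C) →* ↥(C ⊓ commutator E),
      Function.Surjective f :=
  ⟨schurMultiplierToInfCommutator hC, schurMultiplierToInfCommutator_surjective hC⟩
end

section
/- Let u : Γ₁ → Γ be a group homomorphism, M a finite-index subgroup of Γ, and M₁ = u⁻¹(M). Then [Γ₁ : M₁] ≤ [Γ : M]. If moreover u induces an isomorphism of profinite completions (i.e. for every finite group F the map Hom(Γ, F) → Hom(Γ₁, F), φ ↦ φ ∘ u, is bijective), then [Γ₁ : M₁] = [Γ : M]. -/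
/-!
`[Γ₁ : u⁻¹(M)] = [u(Γ₁) : u(Γ₁) ∩ M] ≤ [Γ : M]`. For equality, let `N` be the normal core
of `M`. The hypothesis forces `Γ₁ → Γ ⧸ N` to be onto: if a homomorphism into a finite group
`B` had proper image `H`, then the action of `B` on `B ⧸ H` with an extra fixed point `∞`, and
its conjugate by the transposition of `H` and `∞`, would be distinct homomorphisms agreeing on
`H`. Since `N ≤ M`, this surjectivity makes the cosets of `M` and of `u⁻¹(M)` correspond.
-/

open Equiv QuotientGroup

universe w

theorem MulAction.eqLocus_toPermHom_conj_swap {G X : Type*} [Group G] [MulAction G X]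
    [DecidableEq X] {a b : X} (hb : ∀ g : G, g • b = b) :
    (MulAction.toPermHom G X).eqLocus
        ((MulAut.conj (swap a b)).toMonoidHom.comp (MulAction.toPermHom G X)) =
      MulAction.stabilizer G a := by
  ext g
  change toPerm g = swap a b * toPerm g * (swap a b)⁻¹ ↔ g • a = a
  rw [eq_mul_inv_iff_mul_eq, ← mul_inv_eq_iff_eq_mul, ← swap_apply_apply]
  change swap (g • a) (g • b) = swap a b ↔ g • a = a
  rw [hb]
  refine ⟨fun h => ?_, fun h => by rw [h]⟩
  simpa using congrArg (· b) h

theorem MonoidHom.surjective_of_injective_comp {A : Type*} {B : Type w} [Group A] [Group B]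
    [Finite B] (f : A →* B)
    (hf : ∀ (F : Type w) [Group F] [Finite F], Function.Injective fun g : B →* F => g.comp f) :
    Function.Surjective f := by
  classical
  let ρ := MulAction.toPermHom B (Option (B ⧸ f.range))
  let σ := (MulAut.conj (swap (some ((1 : B) : B ⧸ f.range)) none)).toMonoidHom.comp ρ
  have hρσ : ρ.eqLocus σ = f.range := by
    rw [MulAction.eqLocus_toPermHom_conj_swap (fun _ => rfl)]
    ext b
    rw [MulAction.mem_stabilizer_iff, Option.smul_some, Option.some_inj,
      ← MulAction.mem_stabilizer_iff, MulAction.stabilizer_quotient]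
  have : ρ = σ := hf _ <| MonoidHom.ext fun a => hρσ.ge ⟨a, rfl⟩
  rw [← MonoidHom.range_eq_top, ← hρσ, this, MonoidHom.eqLocus_same]

theorem MonoidHom.surjective_comp_of_injective_comp {A B : Type*} {C : Type w} [Group A] [Group B]
    [Group C] [Finite C] (u : A →* B) {q : B →* C} (hq : Function.Surjective q)
    (hu : ∀ (F : Type w) [Group F] [Finite F], Function.Injective fun g : B →* F => g.comp u) :
    Function.Surjective (q.comp u) :=
  surjective_of_injective_comp _ fun F _ _ _ _ h => (cancel_right hq).1 (hu F h)

namespace Subgroup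

variable {G G' : Type*} [Group G] [Group G'] (f : G' →* G) (H : Subgroup G)

theorem cardinalMk_quotient [H.FiniteIndex] : Cardinal.mk (G ⧸ H) = H.index := Nat.cast_card.symm

instance finiteIndex_comap [H.FiniteIndex] : (H.comap f).FiniteIndex :=
  ⟨by rw [index_comap]; exact FiniteIndex.index_ne_zero⟩

theorem index_comap_le [H.FiniteIndex] : (H.comap f).index ≤ H.index := by
  rw [index_comap, ← relIndex_top_right]
  exact relIndex_le_of_le_right le_top (by rw [relIndex_top_right]; exact FiniteIndex.index_ne_zero)

variable {f H} in
theorem index_comap_eq_of_surjective_mk'_comp {N : Subgroup G} [N.Normal] (hNH : N ≤ H)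
    (hf : Function.Surjective ((mk' N).comp f)) : (H.comap f).index = H.index := by
  have hH : (H.map (mk' N)).comap (mk' N) = H := comap_map_eq_self (by rwa [ker_mk'])
  rw [← hH, comap_comap, index_comap_of_surjective _ hf,
    index_comap_of_surjective _ (mk'_surjective N)]

end Subgroup

/-- Let `u : Γ₁ → Γ` be a homomorphism, `M ≤ Γ` of finite index and
`M₁ = u⁻¹(M)`.  Then `[Γ₁ : M₁] ≤ [Γ : M]` (indices as cardinalities of coset spaces).
If moreover `u` induces an isomorphism of profinite completions, then
`[Γ₁ : M₁] = [Γ : M]`. -/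
theorem index_comap_le_and_eq {Γ₁ Γ : Type} [Group Γ₁] [Group Γ] (u : Γ₁ →* Γ)
    (M : Subgroup Γ) (hM : M.FiniteIndex) :
    Cardinal.mk (Γ₁ ⧸ M.comap u) ≤ Cardinal.mk (Γ ⧸ M) ∧
    ((∀ (F : Type) [Group F] [Finite F],
        Function.Bijective (fun φ : Γ →* F => φ.comp u)) →
      Cardinal.mk (Γ₁ ⧸ M.comap u) = Cardinal.mk (Γ ⧸ M)) := by
  rw [M.cardinalMk_quotient, (M.comap u).cardinalMk_quotient, Nat.cast_le, Nat.cast_inj]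
  refine ⟨M.index_comap_le u, fun hu => ?_⟩
  have hdense : Function.Surjective ((mk' M.normalCore).comp u) :=
    u.surjective_comp_of_injective_comp (mk'_surjective _) fun F _ _ => (hu F).injective
  exact Subgroup.index_comap_eq_of_surjective_mk'_comp M.normalCore_le hdense
end

section
/- Let G be a group, M a normal subgroup of G of finite index, and a, b ∈ G. If the element w(a, b) = (b a b⁻¹) · a · (b a b⁻¹)⁻¹ · a⁻² belongs to M, then a belongs to M. -/
/-!
Pass to the finite quotient `G ⧸ M` and write `x`, `y` for the images of `a`, `b`. The hypothesis
says that `c = y x y⁻¹` conjugates `x` to `x²`, so `cᵏ` conjugates `x` to `x^(2ᵏ)`. Since `c` is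
conjugate to `x`, both have the same order `n`, and `k = n` gives `x^(2ⁿ) = x`, i.e.
`2ⁿ ≡ 1 (mod n)`. This forces `n = 1`: for the least prime `p ∣ n`, the order of `2` modulo `p`
divides both `n` and `p - 1`, so it is `1`, which is absurd.
-/

open Nat

theorem Nat.eq_one_of_pow_modEq_one {a n : ℕ} (hn : 0 < n) (hcop : (a - 1).Coprime n)
    (h : a ^ n ≡ 1 [MOD n]) : n = 1 := by
  by_contra hn1
  set p := n.minFac
  have hp : p.Prime := minFac_prime hn1
  have : Fact p.Prime := ⟨hp⟩
  have hpow : (a : ZMod p) ^ n = 1 := by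
    exact_mod_cast (ZMod.natCast_eq_natCast_iff _ _ _).mpr (h.of_dvd (minFac_dvd n))
  have ha0 : (a : ZMod p) ≠ 0 := fun ha => by simp [ha, hn.ne'] at hpow
  have hd : orderOf (a : ZMod p) = 1 := by
    by_contra hd
    have hdn : orderOf (a : ZMod p) ∣ n := orderOf_dvd_of_pow_eq_one hpow
    have hdp : orderOf (a : ZMod p) ≤ p - 1 :=
      le_of_dvd (by have := hp.two_le; omega) (ZMod.orderOf_dvd_card_sub_one ha0)
    have hd0 : 0 < orderOf (a : ZMod p) := pos_of_dvd_of_pos hdn hn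
    have hpd : p ≤ orderOf (a : ZMod p) := minFac_le_of_dvd (by omega) hdn
    omega
  have ha1 : 1 ≡ a [MOD p] :=
    ((ZMod.natCast_eq_natCast_iff _ _ _).mp (by simpa using orderOf_eq_one_iff.mp hd)).symm
  have ha : 1 ≤ a := one_le_iff_ne_zero.mpr (by rintro rfl; simp at ha0)
  have hpa : p ∣ a - 1 := (modEq_iff_dvd' ha).mp ha1
  exact hp.one_lt.ne' (eq_one_of_dvd_coprimes hcop hpa (minFac_dvd n))

theorem conj_eq_pow_pow_of_conj_eq_pow {G : Type*} [Group G] {c x : G} {m : ℕ}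
    (h : c * x * c⁻¹ = x ^ m) (k : ℕ) : c ^ k * x * (c ^ k)⁻¹ = x ^ m ^ k := by
  induction k with
  | zero => simp
  | succ k ih =>
    calc c ^ (k + 1) * x * (c ^ (k + 1))⁻¹ = c * (c ^ k * x * (c ^ k)⁻¹) * c⁻¹ := by group
      _ = x ^ m ^ (k + 1) := by rw [ih, ← conj_pow, h, ← pow_mul, pow_succ']

theorem eq_one_of_conj_mul_conj_inv_eq_pow {G : Type*} [Group G] {x y : G} {m : ℕ}
    (hx : IsOfFinOrder x) (hm : (m - 1).Coprime (orderOf x))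
    (h : (y * x * y⁻¹) * x * (y * x * y⁻¹)⁻¹ = x ^ m) : x = 1 := by
  have horder : orderOf (y * x * y⁻¹) = orderOf x := by
    simpa [MulAut.conj_apply] using MulEquiv.orderOf_eq (MulAut.conj y) x
  have hfix : x ^ m ^ orderOf x = x ^ 1 := by
    rw [← conj_eq_pow_pow_of_conj_eq_pow h, ← horder, pow_orderOf_eq_one]
    group
  exact orderOf_eq_one_iff.mp <|
    Nat.eq_one_of_pow_modEq_one hx.orderOf_pos hm (pow_eq_pow_iff_modEq.mp hfix)

/-- Let `M` be a finite-index normal subgroup of `G` and `a b : G`.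
If Baumslag's word `w(a, b) = (b a b⁻¹) · a · (b a b⁻¹)⁻¹ · a⁻²` lies in `M`,
then `a ∈ M`. -/
theorem baumslag_word_mem {G : Type} [Group G] (M : Subgroup G) [M.Normal]
    (hM : M.FiniteIndex) (a b : G)
    (hw : (b * a * b⁻¹) * a * (b * a * b⁻¹)⁻¹ * (a ^ 2)⁻¹ ∈ M) :
    a ∈ M := by
  have : Finite (G ⧸ M) := Subgroup.finite_quotient_of_finiteIndex
  rw [← QuotientGroup.eq_one_iff] at hw ⊢
  refine eq_one_of_conj_mul_conj_inv_eq_pow (y := (b : G ⧸ M)) (m := 2)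
    (isOfFinOrder_of_finite _) (coprime_one_left _) ?_
  simpa [mul_inv_eq_one] using hw
end

section
/- Let H be Higman's group: the presented group on four generators a, b, c, d subject to the four relations b a b⁻¹ = a², c b c⁻¹ = b², d c d⁻¹ = c², a d a⁻¹ = d². Then every homomorphism from H to a finite group is trivial; equivalently, every finite quotient of H is the trivial group. -/
/-- Generators of Higman's group: `a = 0`, `b = 1`, `c = 2`, `d = 3`. -/
private abbrev a : FreeGroup (Fin 4) := FreeGroup.of 0
private abbrev b : FreeGroup (Fin 4) := FreeGroup.of 1
private abbrev c : FreeGroup (Fin 4) := FreeGroup.of 2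
private abbrev d : FreeGroup (Fin 4) := FreeGroup.of 3

/-- The four Higman relators `(bab⁻¹)a⁻²`, `(cbc⁻¹)b⁻²`, `(dcd⁻¹)c⁻²`, `(ada⁻¹)d⁻²`. -/
def higmanRels : Set (FreeGroup (Fin 4)) :=
  { b * a * b⁻¹ * (a ^ 2)⁻¹,
    c * b * c⁻¹ * (b ^ 2)⁻¹,
    d * c * d⁻¹ * (c ^ 2)⁻¹,
    a * d * a⁻¹ * (d ^ 2)⁻¹ }

/-- Higman's group `H = ⟨a, b, c, d ∣ bab⁻¹ = a², cbc⁻¹ = b², dcd⁻¹ = c², ada⁻¹ = d²⟩`. -/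
abbrev HigmanGroup : Type := PresentedGroup higmanRels

/-! If `y x y⁻¹ = x²` in a finite group, then `x = x ^ 2 ^ m` with `m` the order of `y`, so every
prime `p` dividing the order of `x` divides `2 ^ m - 1`. The multiplicative order of `2` modulo `p`
then divides `m`, exceeds `1` and is less than `p`, so some prime smaller than `p` divides the order
of `y`. Following the cycle `a → b → c → d → a` of Higman's relations, no prime can be the least one
dividing the order of the image of a generator, hence all four images are trivial. -/

theorem Nat.exists_prime_lt_dvd_of_dvd_two_pow_sub_one {p m : ℕ} (hp : p.Prime) (hm : m ≠ 0)
    (h : p ∣ 2 ^ m - 1) : ∃ q, q.Prime ∧ q < p ∧ q ∣ m := by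
  have := Fact.mk hp
  have h2m : (2 : ZMod p) ^ m = 1 := by
    rw [← sub_eq_zero]
    simpa [Nat.cast_sub Nat.one_le_two_pow] using (ZMod.natCast_eq_zero_iff _ _).mpr h
  have h2 : (2 : ZMod p) ≠ 0 := fun h0 => by simp [h0, hm] at h2m
  set e := orderOf (2 : ZMod p)
  have he1 : e ≠ 1 := fun he => by
    have h21 : (2 : ZMod p) = 1 := orderOf_eq_one_iff.mp he
    exact one_ne_zero (by linear_combination h21 : (1 : ZMod p) = 0)
  have hem : e ∣ m := orderOf_dvd_of_pow_eq_one h2m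
  have hep : e ≤ p - 1 :=
    Nat.le_of_dvd (Nat.sub_pos_of_lt hp.one_lt) (ZMod.orderOf_dvd_card_sub_one h2)
  refine ⟨e.minFac, Nat.minFac_prime he1, ?_, (Nat.minFac_dvd e).trans hem⟩
  exact ((Nat.minFac_le (Nat.pos_of_dvd_of_pos hem (Nat.pos_of_ne_zero hm))).trans hep).trans_lt
    (Nat.sub_lt hp.pos one_pos)

section ConjEqPow

variable {G : Type*} [Group G] {x y : G}

theorem conj_pow_eq_pow_pow {k : ℕ} (h : y * x * y⁻¹ = x ^ k) (n : ℕ) :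
    y ^ n * x * (y ^ n)⁻¹ = x ^ k ^ n := by
  induction n with
  | zero => simp
  | succ n ih =>
    calc y ^ (n + 1) * x * (y ^ (n + 1))⁻¹ = y * (y ^ n * x * (y ^ n)⁻¹) * y⁻¹ := by group
      _ = (y * x * y⁻¹) ^ k ^ n := by rw [ih, conj_pow]
      _ = x ^ k ^ (n + 1) := by rw [h, ← pow_mul, pow_succ']

theorem orderOf_dvd_pow_orderOf_sub_one {k : ℕ} (h : y * x * y⁻¹ = x ^ k) :
    orderOf x ∣ k ^ orderOf y - 1 := by
  have hfix : x ^ k ^ orderOf y = x := by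
    simpa [pow_orderOf_eq_one] using (conj_pow_eq_pow_pow h (orderOf y)).symm
  apply orderOf_dvd_of_pow_eq_one
  rcases hN : k ^ orderOf y with _ | N
  · simp
  · rw [hN, pow_succ, mul_eq_right] at hfix
    simpa using hfix

theorem exists_prime_lt_dvd_orderOf_of_conj_eq_sq [Finite G] (h : y * x * y⁻¹ = x ^ 2) {p : ℕ}
    (hp : p.Prime) (hpx : p ∣ orderOf x) : ∃ q, q.Prime ∧ q < p ∧ q ∣ orderOf y :=
  Nat.exists_prime_lt_dvd_of_dvd_two_pow_sub_one hp (orderOf_pos y).ne'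
    (hpx.trans (orderOf_dvd_pow_orderOf_sub_one h))

end ConjEqPow

theorem eq_one_of_forall_conj_eq_sq {G ι : Type*} [Group G] [Finite G] (g : ι → G) (σ : ι → ι)
    (h : ∀ i, g (σ i) * g i * (g (σ i))⁻¹ = g i ^ 2) (i : ι) : g i = 1 := by
  have hprime : ∀ p, p.Prime → ∀ i, ¬ p ∣ orderOf (g i) := by
    intro p
    induction p using Nat.strong_induction_on with
    | _ p ih =>
      intro hp i hpi
      obtain ⟨q, hq, hqp, hqi⟩ := exists_prime_lt_dvd_orderOf_of_conj_eq_sq (h i) hp hpi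
      exact ih q hqp hq (σ i) hqi
  exact orderOf_eq_one_iff.mp (Nat.eq_one_iff_not_exists_prime_dvd.mpr fun p hp => hprime p hp i)

theorem of_succ_conj_mem_higmanRels (i : Fin 4) :
    FreeGroup.of (i + 1) * FreeGroup.of i * (FreeGroup.of (i + 1))⁻¹ * (FreeGroup.of i ^ 2)⁻¹
      ∈ higmanRels := by
  fin_cases i <;> simp [higmanRels]

theorem HigmanGroup.map_of_succ_conj_eq_sq {G : Type*} [Group G] (f : HigmanGroup →* G)
    (i : Fin 4) : f (.of (i + 1)) * f (.of i) * (f (.of (i + 1)))⁻¹ = f (.of i) ^ 2 := by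
  have := congrArg f (PresentedGroup.one_of_mem (of_succ_conj_mem_higmanRels i))
  simp only [map_mul, map_inv, map_pow, map_one] at this
  exact mul_inv_eq_one.mp this

/-- Every homomorphism from Higman's group to a finite group is
trivial; equivalently every finite quotient of Higman's group is trivial. -/
theorem higman_no_finite_quotients :
    ∀ (F : Type) [Group F] [Finite F] (f : HigmanGroup →* F), f = 1 := by
  intro F _ _ f
  exact PresentedGroup.ext fun i =>
    eq_one_of_forall_conj_eq_sq (fun i => f (.of i)) (· + 1)
      (HigmanGroup.map_of_succ_conj_eq_sq f) i
end
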